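/- arXiv:math/0604508 — 7 statements merged into one kernel-verified Lean document; each statement's English description precedes it below -/
import Mathlib

section
/- Let M be a compact smooth manifold. Then every smooth function f : M → ℂ is a finite ℂ-linear combination of functions of the form x ↦ exp(i·ψ(x)) where ψ : M → ℝ is smooth; that is, the ℂ-linear span of {x ↦ exp(i·ψ(x)) : ψ : M → ℝ smooth} inside the algebra of smooth ℂ-valued functions on M is the whole algebra. -/
/-!
Every real number of absolute value `< 1` is a cosine of a real number, and smoothly so:
`arccos` is smooth on `(-1, 1)`. Hence a smooth `u : M → ℝ` with `|u| < R` can be written as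
`u = R cos ψ = (R / 2) (exp (i ψ) + exp (-i ψ))` with `ψ = arccos (u / R)` smooth. On a compact
manifold every smooth `f : M → ℂ` is bounded, so this applies to `Re f` and `Im f`.
-/

open scoped Manifold ContDiff

section ExpISpan

variable {E : Type*} [NormedAddCommGroup E] [NormedSpace ℝ E]
  {H : Type*} [TopologicalSpace H] (IM : ModelWithCorners ℝ E H)
  {M : Type*} [TopologicalSpace M] [ChartedSpace H M] {n : ℕ∞ω}

def expISpan (n : ℕ∞ω) : Submodule ℂ (M → ℂ) :=
  Submodule.span ℂ
    {g : M → ℂ | ∃ ψ : M → ℝ, ContMDiff IM 𝓘(ℝ, ℝ) n ψ ∧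
      g = fun x => Complex.exp (Complex.I * ψ x)}

variable {IM}

theorem exp_I_mul_mem_expISpan {ψ : M → ℝ} (hψ : ContMDiff IM 𝓘(ℝ, ℝ) n ψ) :
    (fun x => Complex.exp (Complex.I * ψ x)) ∈ expISpan IM n :=
  Submodule.subset_span ⟨ψ, hψ, rfl⟩

theorem ofReal_cos_mem_expISpan {ψ : M → ℝ} (hψ : ContMDiff IM 𝓘(ℝ, ℝ) n ψ) :
    (fun x => (Real.cos (ψ x) : ℂ)) ∈ expISpan IM n := by
  have hcos : (fun x => (Real.cos (ψ x) : ℂ)) =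
      (2⁻¹ : ℂ) • ((fun x => Complex.exp (Complex.I * ψ x)) +
        fun x => Complex.exp (Complex.I * ((-ψ x : ℝ) : ℂ))) := by
    funext x
    rw [Pi.smul_apply, Pi.add_apply, smul_eq_mul, Complex.ofReal_cos, Complex.ofReal_neg, mul_neg,
      mul_comm Complex.I, ← neg_mul, ← Complex.two_cos, ← mul_assoc, inv_mul_cancel₀ two_ne_zero,
      one_mul]
  rw [hcos]
  exact Submodule.smul_mem _ _ <|
    add_mem (exp_I_mul_mem_expISpan hψ) (exp_I_mul_mem_expISpan hψ.neg)

theorem ofReal_mem_expISpan_of_abs_lt_one {u : M → ℝ} (hu : ContMDiff IM 𝓘(ℝ, ℝ) n u)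
    (hu_lt : ∀ x, |u x| < 1) : (fun x => (u x : ℂ)) ∈ expISpan IM n := by
  have hψ : ContMDiff IM 𝓘(ℝ, ℝ) n (fun x => Real.arccos (u x)) := fun x =>
    have ⟨hlo, hhi⟩ := abs_lt.mp (hu_lt x)
    (Real.contDiffAt_arccos hlo.ne' hhi.ne).comp_contMDiffAt (hu x)
  convert ofReal_cos_mem_expISpan hψ using 3 with x
  have ⟨hlo, hhi⟩ := abs_lt.mp (hu_lt x)
  rw [Real.cos_arccos hlo.le hhi.le]

theorem ofReal_mem_expISpan_of_abs_lt {u : M → ℝ} (hu : ContMDiff IM 𝓘(ℝ, ℝ) n u) {R : ℝ}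
    (hu_lt : ∀ x, |u x| < R) : (fun x => (u x : ℂ)) ∈ expISpan IM n := by
  have hR : ∀ x, 0 < R := fun x => (abs_nonneg _).trans_lt (hu_lt x)
  have hscaled : (fun x => ((u x / R : ℝ) : ℂ)) ∈ expISpan IM n :=
    ofReal_mem_expISpan_of_abs_lt_one (hu.div_const R) fun x => by
      rw [abs_div, abs_of_pos (hR x), div_lt_one (hR x)]
      exact hu_lt x
  convert Submodule.smul_mem _ (R : ℂ) hscaled using 1
  funext x
  simp only [Pi.smul_apply, smul_eq_mul, Complex.ofReal_div]
  field_simp [Complex.ofReal_ne_zero.mpr (hR x).ne']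

theorem mem_expISpan_of_isBounded {f : M → ℂ} (hf : ContMDiff IM 𝓘(ℝ, ℂ) n f)
    (hbdd : Bornology.IsBounded (Set.range f)) : f ∈ expISpan IM n := by
  obtain ⟨R, -, hR⟩ := hbdd.exists_pos_norm_lt
  have hf_lt : ∀ x, ‖f x‖ < R := fun x => hR _ ⟨x, rfl⟩
  have hre := ofReal_mem_expISpan_of_abs_lt (Complex.reCLM.contDiff.comp_contMDiff hf)
    fun x => (Complex.abs_re_le_norm _).trans_lt (hf_lt x)
  have him := ofReal_mem_expISpan_of_abs_lt (Complex.imCLM.contDiff.comp_contMDiff hf)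
    fun x => (Complex.abs_im_le_norm _).trans_lt (hf_lt x)
  convert add_mem hre (Submodule.smul_mem _ Complex.I him) using 1
  funext x
  simp only [Pi.add_apply, Pi.smul_apply, smul_eq_mul, Function.comp_apply,
    Complex.reCLM_apply, Complex.imCLM_apply]
  rw [mul_comm, Complex.re_add_im]

end ExpISpan

theorem stmt_1_general {E : Type*} [NormedAddCommGroup E] [NormedSpace ℝ E]
    {H : Type*} [TopologicalSpace H] (IM : ModelWithCorners ℝ E H)
    {M : Type*} [TopologicalSpace M] [ChartedSpace H M]
    [CompactSpace M] (f : M → ℂ) (hf : ContMDiff IM 𝓘(ℝ, ℂ) (⊤ : ℕ∞) f) :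
    f ∈ Submodule.span ℂ
      {g : M → ℂ | ∃ ψ : M → ℝ, ContMDiff IM 𝓘(ℝ, ℝ) (⊤ : ℕ∞) ψ ∧
        g = fun x => Complex.exp (Complex.I * ψ x)} :=
  mem_expISpan_of_isBounded hf (isCompact_range hf.continuous).isBounded

/-- On a compact smooth manifold `M`, every smooth function `f : M → ℂ` is a finite
ℂ-linear combination of functions of the form `x ↦ exp (i * ψ x)` with `ψ : M → ℝ` smooth. -/
theorem stmt_1 {E : Type*} [NormedAddCommGroup E] [NormedSpace ℝ E]
    {H : Type*} [TopologicalSpace H] (IM : ModelWithCorners ℝ E H)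
    {M : Type*} [TopologicalSpace M] [ChartedSpace H M] [IsManifold IM (⊤ : ℕ∞) M]
    [CompactSpace M] (f : M → ℂ) (hf : ContMDiff IM 𝓘(ℝ, ℂ) (⊤ : ℕ∞) f) :
    f ∈ Submodule.span ℂ
      {g : M → ℂ | ∃ ψ : M → ℝ, ContMDiff IM 𝓘(ℝ, ℝ) (⊤ : ℕ∞) ψ ∧
        g = fun x => Complex.exp (Complex.I * ψ x)} :=
  stmt_1_general IM f hf
end

section
/- Let A be a unital C*-algebra, let x ∈ A be selfadjoint, and suppose there is a sequence (tₙ) of nonzero real numbers with tₙ → 0 such that exp(i·tₙ·x) lies in the center of A for every n. Then x lies in the center of A. -/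
/-! The difference quotients `z⁻¹ • (exp (z • x) - 1)` of `w ↦ exp (w • x)` at `0` stay in the
center, a closed subalgebra, and converge to the derivative `x` as `z → 0`. -/

open NormedSpace Filter Topology

theorem Set.isClosed_center (M : Type*) [Semigroup M] [TopologicalSpace M]
    [SeparatelyContinuousMul M] [T2Space M] : IsClosed (Set.center M) :=
  Set.centralizer_univ (M := M) ▸ Set.isClosed_centralizer _

theorem slope_exp_smul_zero_mem_center {𝕂 A : Type*} [Field 𝕂] [Ring A] [Algebra 𝕂 A]
    [TopologicalSpace A] [IsTopologicalRing A] {x : A} {z : 𝕂}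
    (hz : exp (z • x) ∈ Set.center A) :
    slope (fun w : 𝕂 => exp (w • x)) 0 z ∈ Set.center A := by
  rw [slope_def_module, sub_zero, zero_smul, exp_zero]
  exact Set.smul_mem_center _ ((Subring.center A).sub_mem hz Set.one_mem_center)

theorem mem_center_of_exp_smul_mem_center {𝕂 A ι : Type*} [RCLike 𝕂] [NormedRing A]
    [NormedAlgebra 𝕂 A] [CompleteSpace A] {x : A} {l : Filter ι} [l.NeBot] {z : ι → 𝕂}
    (hz : Tendsto z l (𝓝[≠] 0)) (hcenter : ∀ᶠ i in l, exp (z i • x) ∈ Set.center A) :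
    x ∈ Set.center A := by
  have hderiv : HasDerivAt (fun w : 𝕂 => exp (w • x)) x 0 := by
    simpa using hasDerivAt_exp_smul_const (𝕂 := 𝕂) x 0
  exact (Set.isClosed_center A).mem_of_tendsto
    ((hasDerivAt_iff_tendsto_slope.mp hderiv).comp hz)
    (hcenter.mono fun _ => slope_exp_smul_zero_mem_center)

theorem stmt_2_general {A : Type*} [NormedRing A]
    [NormedAlgebra ℂ A] [CompleteSpace A]
    (x : A) (t : ℕ → ℝ)
    (ht0 : ∀ n, t n ≠ 0) (htlim : Filter.Tendsto t Filter.atTop (nhds 0))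
    (hcentral : ∀ n, exp ((Complex.I * (t n : ℂ)) • x) ∈ Set.center A) :
    x ∈ Set.center A := by
  have hz : Tendsto (fun n => Complex.I * (t n : ℂ)) atTop (𝓝[≠] 0) := by
    refine tendsto_nhdsWithin_iff.mpr ⟨?_, .of_forall fun n => ?_⟩
    · simpa using ((Complex.continuous_ofReal.tendsto 0).comp htlim).const_mul Complex.I
    · exact mul_ne_zero Complex.I_ne_zero (Complex.ofReal_ne_zero.mpr (ht0 n))
  exact mem_center_of_exp_smul_mem_center hz (.of_forall hcentral)

/-- If `x` is selfadjoint in a unital C*-algebra and `exp (i * tₙ • x)` is central for a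
sequence of nonzero reals `tₙ → 0`, then `x` is central. -/
theorem stmt_2 {A : Type*} [NormedRing A] [StarRing A] [CStarRing A]
    [NormedAlgebra ℂ A] [CompleteSpace A] [StarModule ℂ A]
    (x : A) (hx : IsSelfAdjoint x) (t : ℕ → ℝ)
    (ht0 : ∀ n, t n ≠ 0) (htlim : Filter.Tendsto t Filter.atTop (nhds 0))
    (hcentral : ∀ n, exp ((Complex.I * (t n : ℂ)) • x) ∈ Set.center A) :
    x ∈ Set.center A :=
  stmt_2_general x t ht0 htlim hcentral
end

section
/- Let A be a unital C*-algebra and let x ∈ A be a selfadjoint element that does not lie in the center of A. Then the set of inner automorphisms { a ↦ exp(i·x/n) · a · exp(i·x/n)⁻¹ : n ∈ ℕ, n ≥ 1 } is infinite (i.e., the corresponding maps A → A form an infinite set). -/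
/-!
If the inner automorphisms `Ad exp(i x / n)` took only finitely many values, then beyond any `N`
there would be `a < b` with `Ad exp(i x / a) = Ad exp(i x / b)`, so `exp(t x)` is central for
`t = i / b - i / a`, a nonzero number of modulus `< 1 / N`. The difference quotients
`t⁻¹ (exp(t x) - 1)` are then central and converge to `x`, while the center is closed.
-/

open NormedSpace Filter Topology Set

lemma Ring.inverse_mul_mem_center_of_conj_eq {M : Type*} [MonoidWithZero M] {u v : M}
    (hu : IsUnit u) (hv : IsUnit v)
    (h : (fun a => u * a * Ring.inverse u) = fun a => v * a * Ring.inverse v) :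
    Ring.inverse u * v ∈ center M := by
  lift u to Mˣ using hu
  lift v to Mˣ using hv
  rw [Ring.inverse_unit, Semigroup.mem_center_iff]
  intro a
  have hconj := congrFun h a
  simp only [Ring.inverse_unit] at hconj
  calc a * (↑u⁻¹ * ↑v) = ↑u⁻¹ * (u * a * ↑u⁻¹) * v := by simp [mul_assoc]
    _ = ↑u⁻¹ * v * a := by rw [hconj]; simp [mul_assoc]

section Exp

variable {𝕂 A : Type*} [RCLike 𝕂] [NormedRing A] [NormedAlgebra 𝕂 A] [CompleteSpace A] {x : A}

lemma exp_sub_smul_mem_center_of_conj_eq {s t : 𝕂}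
    (h : (fun a => exp (s • x) * a * Ring.inverse (exp (s • x))) =
      fun a => exp (t • x) * a * Ring.inverse (exp (t • x))) :
    exp ((t - s) • x) ∈ center A := by
  -- the algebraic `exp` lemmas are stated over `ℚ`; `exp` itself does not depend on this choice
  let : NormedAlgebra ℚ A := .restrictScalars ℚ 𝕂 A
  have hmem := Ring.inverse_mul_mem_center_of_conj_eq (isUnit_exp _) (isUnit_exp _) h
  have hcomm : Commute (-(s • x)) (t • x) := ((Commute.refl x).smul_left s).smul_right t |>.neg_left
  rwa [Ring.inverse_exp, ← exp_add_of_commute hcomm, ← neg_smul, ← add_smul, neg_add_eq_sub] at hmem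

lemma mem_center_of_frequently_exp_smul_mem_center
    (h : ∃ᶠ t in 𝓝[≠] (0 : 𝕂), exp (t • x) ∈ center A) : x ∈ center A := by
  have hslope : Tendsto (slope (fun t : 𝕂 => exp (t • x)) 0) (𝓝[≠] 0) (𝓝 x) := by
    simpa using (hasDerivAt_exp_smul_const (𝕂 := 𝕂) x 0).tendsto_slope
  rw [← centralizer_univ]
  refine (isClosed_centralizer univ).mem_of_frequently_of_tendsto (h.mono fun t ht => ?_) hslope
  rw [centralizer_univ, slope_def_module, zero_smul, exp_zero]
  exact (Subalgebra.center 𝕂 A).smul_mem ((Subalgebra.center 𝕂 A).sub_mem ht (one_mem _)) _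

end Exp

lemma norm_I_div_natCast_sub_I_div_natCast {a b : ℕ} (ha : 0 < a) (hab : a ≤ b) :
    ‖Complex.I / b - Complex.I / a‖ = 1 / a - 1 / b := by
  have hdiff : Complex.I / b - Complex.I / a = ((1 / b - 1 / a : ℝ) : ℂ) * Complex.I := by
    push_cast; ring
  rw [hdiff, norm_mul, Complex.norm_I, mul_one, Complex.norm_real, Real.norm_eq_abs, abs_sub_comm,
    abs_of_nonneg (sub_nonneg.2 (one_div_le_one_div_of_le (by positivity) (by exact_mod_cast hab)))]

theorem stmt_3_general {A : Type*} [NormedRing A]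
    [NormedAlgebra ℂ A] [CompleteSpace A]
    (x : A) (hxc : x ∉ Set.center A) :
    Set.Infinite {f : A → A | ∃ n : ℕ, 1 ≤ n ∧
      f = fun a => exp ((Complex.I / (n : ℂ)) • x) * a *
        Ring.inverse (exp ((Complex.I / (n : ℂ)) • x))} := by
  intro hfin
  refine hxc (mem_center_of_frequently_exp_smul_mem_center (𝕂 := ℂ) ?_)
  rw [Metric.nhdsWithin_basis_ball.frequently_iff]
  intro ε hε
  obtain ⟨N, hN⟩ := exists_nat_one_div_lt hε
  obtain ⟨a, ha, b, -, hab, hconj⟩ := (Set.Ici_infinite (N + 1)).exists_lt_map_eq_of_mapsTo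
    (f := fun n : ℕ => fun a => exp ((Complex.I / (n : ℂ)) • x) * a *
      Ring.inverse (exp ((Complex.I / (n : ℂ)) • x)))
    (fun n hn => by exact ⟨n, (Nat.le_add_left 1 N).trans hn, rfl⟩) hfin
  have ha₀ : 0 < a := N.succ_pos.trans_le ha
  have hnorm := norm_I_div_natCast_sub_I_div_natCast ha₀ hab.le
  refine ⟨_, ⟨?_, ?_⟩, exp_sub_smul_mem_center_of_conj_eq hconj⟩
  · have hNa : (N : ℝ) + 1 ≤ a := by exact_mod_cast ha
    rw [mem_ball_zero_iff, hnorm]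
    calc 1 / (a : ℝ) - 1 / b < 1 / a := sub_lt_self _ (by have := ha₀.trans hab; positivity)
      _ ≤ 1 / (N + 1) := one_div_le_one_div_of_le (by positivity) hNa
      _ < ε := hN
  · rw [mem_compl_singleton_iff, ← norm_pos_iff, hnorm, sub_pos]
    exact one_div_lt_one_div_of_lt (by positivity) (by exact_mod_cast hab)

/-- If `x` is a selfadjoint, non-central element of a unital C*-algebra `A`, then the inner
automorphisms `a ↦ exp(i•x/n) * a * exp(i•x/n)⁻¹`, for `n ≥ 1`, form an infinite set of maps. -/
theorem stmt_3 {A : Type*} [NormedRing A] [StarRing A] [CStarRing A]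
    [NormedAlgebra ℂ A] [CompleteSpace A] [StarModule ℂ A]
    (x : A) (hx : IsSelfAdjoint x) (hxc : x ∉ Set.center A) :
    Set.Infinite {f : A → A | ∃ n : ℕ, 1 ≤ n ∧
      f = fun a => exp ((Complex.I / (n : ℂ)) • x) * a *
        Ring.inverse (exp ((Complex.I / (n : ℂ)) • x))} :=
  stmt_3_general x hxc
end

section
/- Let A be a unital C*-algebra and let x, y ∈ A be selfadjoint elements that do not commute (x·y ≠ y·x). Then the set of inner automorphisms { a ↦ exp(i·ε·(x + s·y)) · a · exp(i·ε·(x + s·y))⁻¹ : s, ε ∈ ℝ } is infinite. -/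
/-!
Already the inner automorphisms with `s = 0` form infinitely many maps. They are the image of the
one-parameter group `t ↦ Ad (exp (t • i x))`, a homomorphism out of the divisible group `ℝ`;
a homomorphism from a divisible group with finite image is trivial, since the image then has
some finite exponent `n` and every element is an `n`-th power. So all `exp (t • i x)` would
commute with `y`, and differentiating at `t = 0` gives `x y = y x`.
-/

open NormedSpace

noncomputable instance : RootableBy (Multiplicative ℝ) ℕ where
  root a n := .ofAdd (a.toAdd / n)
  root_zero _ := by simp
  root_cancel a hn := by
    rw [← ofAdd_toAdd a, ← ofAdd_nsmul, toAdd_ofAdd, nsmul_eq_mul]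
    congr 1
    field_simp

theorem MonoidHom.eq_one_of_finite_range {M G : Type*} [Group M] [RootableBy M ℕ] [Group G]
    (f : M →* G) (hf : (Set.range f).Finite) : f = 1 := by
  have : Finite f.range := hf.to_subtype
  ext m
  set n := Nat.card f.range
  have hn : n ≠ 0 := Nat.card_pos.ne'
  let r : f.range := ⟨f (RootableBy.root m n), _, rfl⟩
  calc f m = f (RootableBy.root m n ^ n) := by rw [RootableBy.root_cancel _ hn]
    _ = (r ^ n : f.range) := by simp [r]
    _ = 1 := by rw [pow_card_eq_one']; rfl

section OneParameterGroup

variable {A : Type*} [NormedRing A] [NormedAlgebra ℝ A] [CompleteSpace A]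

noncomputable def expSMulUnitsHom (b : A) : Multiplicative ℝ →* Aˣ :=
  letI : NormedAlgebra ℚ A := .restrictScalars ℚ ℝ A
  { toFun t := (isUnit_exp (t.toAdd • b)).unit
    map_one' := Units.ext (by simp)
    map_mul' s t := Units.ext <| by
      simpa [add_smul] using exp_add_of_commute ((Commute.refl b).smul_left _ |>.smul_right _) }

@[simp]
theorem coe_expSMulUnitsHom (b : A) (t : Multiplicative ℝ) :
    (expSMulUnitsHom b t : A) = exp (t.toAdd • b) := rfl

theorem commute_of_forall_commute_exp_smul {b y : A}
    (h : ∀ t : ℝ, Commute (exp (t • b)) y) : Commute b y := by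
  have hderiv : HasDerivAt (fun t : ℝ => exp (t • b) * y - y * exp (t • b)) (b * y - y * b) 0 := by
    have hexp := hasDerivAt_exp_smul_const b (0 : ℝ)
    rw [zero_smul, exp_zero, one_mul] at hexp
    exact (hexp.mul_const y).sub (hexp.const_mul y)
  have hconst : (fun t : ℝ => exp (t • b) * y - y * exp (t • b)) = fun _ => 0 :=
    funext fun t => sub_eq_zero.mpr (h t).eq
  rw [hconst] at hderiv
  exact sub_eq_zero.mp (hderiv.unique (hasDerivAt_const 0 0))

end OneParameterGroup

theorem stmt_4_general {A : Type*} [NormedRing A]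
    [NormedAlgebra ℂ A] [CompleteSpace A]
    (x y : A) (hxy : x * y ≠ y * x) :
    Set.Infinite {f : A → A | ∃ s ε : ℝ,
      f = fun a => exp ((Complex.I * (ε : ℂ)) • (x + (s : ℂ) • y)) * a *
        Ring.inverse (exp ((Complex.I * (ε : ℂ)) • (x + (s : ℂ) • y)))} := by
  set u := expSMulUnitsHom (Complex.I • x)
  set ad : Multiplicative ℝ →* MulAut A :=
    (MulDistribMulAction.toMulAut (ConjAct Aˣ) A).comp (ConjAct.toConjAct.toMonoidHom.comp u)
  have had : ∀ t a, ad t a = u t * a * ↑(u t)⁻¹ := fun t a => ConjAct.units_smul_def _ _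
  refine Set.Infinite.mono (s := (⇑) '' Set.range ad) ?_ ?_
  · rintro _ ⟨_, ⟨t, rfl⟩, rfl⟩
    refine ⟨0, t.toAdd, funext fun a => ?_⟩
    rw [had, ← Ring.inverse_unit, coe_expSMulUnitsHom, ← Complex.coe_smul, smul_smul, mul_comm]
    simp
  refine .image DFunLike.coe_injective.injOn fun hfin => hxy ?_
  have hone := ad.eq_one_of_finite_range hfin
  refine (Commute.smul_left_iff₀ Complex.I_ne_zero).mp <|
    commute_of_forall_commute_exp_smul fun t => ?_
  have := had (.ofAdd t) y
  rwa [hone, MonoidHom.one_apply, MulAut.one_apply, eq_comm, Units.mul_inv_eq_iff_eq_mul] at this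

/-- If `x, y` are selfadjoint elements of a unital C*-algebra `A` that do not commute, then the
inner automorphisms `a ↦ exp(iε•(x + s•y)) * a * exp(iε•(x + s•y))⁻¹`, for `s, ε ∈ ℝ`,
form an infinite set of maps. -/
theorem stmt_4 {A : Type*} [NormedRing A] [StarRing A] [CStarRing A]
    [NormedAlgebra ℂ A] [CompleteSpace A] [StarModule ℂ A]
    (x y : A) (hx : IsSelfAdjoint x) (hy : IsSelfAdjoint y) (hxy : x * y ≠ y * x) :
    Set.Infinite {f : A → A | ∃ s ε : ℝ,
      f = fun a => exp ((Complex.I * (ε : ℂ)) • (x + (s : ℂ) • y)) * a *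
        Ring.inverse (exp ((Complex.I * (ε : ℂ)) • (x + (s : ℂ) • y)))} :=
  stmt_4_general x y hxy
end

section
/- Let A be a unital C*-algebra and let B ⊆ A be a closed *-subalgebra containing the unit of A. If the set of inner automorphisms { a ↦ u·a·u⁻¹ : u ∈ B, u unitary in A } is a finite set of maps A → A, then B is contained in the center of A. -/
open NormedSpace ComplexStarModule

theorem aux_smul_mem {A : Type*} [NormedRing A] [StarRing A]
    [NormedAlgebra ℂ A] [StarModule ℂ A]
    (B : StarSubalgebra ℂ A) {y : A} (hy : y ∈ B) (t : ℝ) : t • y ∈ B := by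
  have : t • y = ((t : ℂ)) • y := by rw [Complex.coe_smul]
  rw [this]
  exact SMulMemClass.smul_mem _ hy

theorem aux_exp_mem {A : Type*} [NormedRing A] [StarRing A] [CStarRing A]
    [NormedAlgebra ℂ A] [CompleteSpace A] [StarModule ℂ A]
    (B : StarSubalgebra ℂ A) (hB : IsClosed (B : Set A)) {y : A} (hy : y ∈ B) :
    exp y ∈ B := by
  have hsum := (NormedSpace.expSeries_summable' (𝕂 := ℝ) y).hasSum.tendsto_sum_nat
  have hexp : exp y = ∑' n : ℕ, ((n.factorial : ℝ))⁻¹ • y ^ n :=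
    congrFun (NormedSpace.exp_eq_tsum ℝ) y
  rw [hexp]
  refine hB.mem_of_tendsto hsum (Filter.Eventually.of_forall fun n => ?_)
  exact sum_mem fun k _ => aux_smul_mem B (pow_mem hy k) _

/-- A selfadjoint element of B commutes with everything. -/
theorem aux_selfadj {A : Type*} [NormedRing A] [StarRing A] [CStarRing A]
    [NormedAlgebra ℂ A] [CompleteSpace A] [StarModule ℂ A]
    (B : StarSubalgebra ℂ A) (hB : IsClosed (B : Set A))
    (hfin : Set.Finite {f : A → A | ∃ u : A, u ∈ B ∧ u ∈ unitary A ∧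
      f = fun a => u * a * star u})
    {x : A} (hxB : x ∈ B) (hx : IsSelfAdjoint x) (a : A) : x * a = a * x := by
  let +nondep : NormedAlgebra ℚ A := .restrictScalars ℚ ℂ A
  set y : A := Complex.I • x with hy_def
  have hyB : y ∈ B := SMulMemClass.smul_mem _ hxB
  have hy_skew : y ∈ skewAdjoint A := hx.smul_mem_skewAdjoint Complex.conj_I
  have hty_skew : ∀ t : ℝ, t • y ∈ skewAdjoint A := by
    intro t
    rw [skewAdjoint.mem_iff] at hy_skew ⊢
    rw [star_smul, star_trivial, hy_skew, smul_neg]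
  set u : ℝ → A := fun t => exp (t • y) with hu_def
  have hu_unit : ∀ t, u t ∈ unitary A := fun t =>
    exp_mem_unitary_of_mem_skewAdjoint (hty_skew t)
  have hu_mem : ∀ t, u t ∈ B := fun t => aux_exp_mem B hB (aux_smul_mem B hyB t)
  -- the conjugation function
  set f : ℝ → A := fun t => u t * a * star (u t) with hf_def
  have hf_cont : Continuous f := by
    have hu_cont : Continuous u := exp_continuous.comp (continuous_id.smul continuous_const)
    exact (hu_cont.mul continuous_const).mul (continuous_star.comp hu_cont)
  -- f takes values in a finite set
  set V : Set A := (fun g : A → A => g a) '' {f : A → A | ∃ u : A, u ∈ B ∧ u ∈ unitary A ∧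
      f = fun a => u * a * star u} with hV_def
  have hV_fin : V.Finite := hfin.image _
  have hf_mem : ∀ t, f t ∈ V := by
    intro t
    exact ⟨fun b => u t * b * star (u t), ⟨u t, hu_mem t, hu_unit t, rfl⟩, rfl⟩
  -- f is constant by connectedness
  have hf0 : f 0 = a := by
    simp [hf_def, hu_def, zero_smul, exp_zero]
  have hconst : ∀ t, f t = a := by
    have hclosed : IsClosed {t : ℝ | f t = a} :=
      isClosed_singleton.preimage hf_cont
    have hopen : IsOpen {t : ℝ | f t = a} := by
      have heq : {t : ℝ | f t = a} = (f ⁻¹' (V \ {a}))ᶜ := by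
        ext t
        simp only [Set.mem_compl_iff, Set.mem_preimage, Set.mem_diff, Set.mem_singleton_iff,
          Set.mem_setOf_eq]
        constructor
        · intro h hh; exact hh.2 h
        · intro h; by_contra hne; exact h ⟨hf_mem t, hne⟩
      rw [heq]
      exact (((hV_fin.subset Set.diff_subset).isClosed).preimage hf_cont).isOpen_compl
    have := isClopen_iff.mp ⟨hclosed, hopen⟩
    rcases this with h | h
    · exact absurd (h ▸ hf0 : (0:ℝ) ∈ (∅ : Set ℝ)) (Set.notMem_empty 0)
    · intro t
      have : t ∈ {t : ℝ | f t = a} := h ▸ Set.mem_univ t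
      exact this
  -- now u t commutes with a
  have hcomm : ∀ t : ℝ, u t * a = a * u t := by
    intro t
    have h1 := hconst t
    have h2 : star (u t) * u t = 1 := (Unitary.mem_iff.mp (hu_unit t)).1
    calc u t * a = u t * a * (star (u t) * u t) := by rw [h2, mul_one]
    _ = (u t * a * star (u t)) * u t := by rw [← mul_assoc]
    _ = a * u t := by rw [show u t * a * star (u t) = a from h1]
  -- differentiate at 0
  have hder : HasDerivAt (fun t : ℝ => u t * a - a * u t) (y * a - a * y) 0 := by
    have h1 : HasDerivAt (fun t : ℝ => u t) y 0 := by
      have := hasDerivAt_exp_smul_const (𝕂 := ℝ) y (0 : ℝ)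
      simpa [zero_smul, exp_zero] using this
    exact (h1.mul_const a).sub (h1.const_mul a)
  have hzero : (fun t : ℝ => u t * a - a * u t) = fun _ => (0 : A) := by
    funext t; rw [sub_eq_zero]; exact hcomm t
  rw [hzero] at hder
  have := hder.unique (hasDerivAt_const 0 0)
  have hya : y * a = a * y := by rwa [sub_eq_zero] at this
  -- strip the I
  rw [hy_def, smul_mul_assoc, mul_smul_comm] at hya
  have := smul_right_injective A Complex.I_ne_zero hya
  exact this



/-- If `B` is a closed unital *-subalgebra of a unital C*-algebra `A` and the inner automorphisms
`a ↦ u * a * u⁻¹` (`u ∈ B` unitary in `A`, so `u⁻¹ = star u`) form a finite set of maps `A → A`,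
then `B` is contained in the center of `A`. -/
theorem stmt_5 {A : Type*} [NormedRing A] [StarRing A] [CStarRing A]
    [NormedAlgebra ℂ A] [CompleteSpace A] [StarModule ℂ A]
    (B : StarSubalgebra ℂ A) (hB : IsClosed (B : Set A))
    (hfin : Set.Finite {f : A → A | ∃ u : A, u ∈ B ∧ u ∈ unitary A ∧
      f = fun a => u * a * star u}) :
    (B : Set A) ⊆ Set.center A := by
  intro b hb
  rw [SetLike.mem_coe] at hb
  rw [Semigroup.mem_center_iff]
  intro a
  have hreB : (ℜ b : A) ∈ B := by
    rw [realPart_apply_coe]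
    exact aux_smul_mem B (add_mem hb (star_mem hb)) _
  have himB : (ℑ b : A) ∈ B := by
    rw [imaginaryPart_apply_coe]
    exact SMulMemClass.smul_mem _ (aux_smul_mem B (sub_mem hb (star_mem hb)) _)
  have hre := aux_selfadj B hB hfin hreB (ℜ b).2 a
  have him := aux_selfadj B hB hfin himB (ℑ b).2 a
  have hdecomp := realPart_add_I_smul_imaginaryPart b
  calc a * b = a * ((ℜ b : A) + Complex.I • (ℑ b : A)) := by rw [hdecomp]
  _ = a * (ℜ b : A) + Complex.I • (a * (ℑ b : A)) := by
      rw [mul_add, mul_smul_comm]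
  _ = (ℜ b : A) * a + Complex.I • ((ℑ b : A) * a) := by rw [hre, him]
  _ = ((ℜ b : A) + Complex.I • (ℑ b : A)) * a := by rw [add_mul, smul_mul_assoc]
  _ = b * a := by rw [hdecomp]
end

section
/- Let A be a unital C*-algebra such that the set of inner automorphisms { a ↦ u·a·u⁻¹ : u ∈ A unitary } is finite (as a set of maps A → A). Then A is commutative. -/
open Complex ComplexStarModule

/-- If the inner automorphisms `a ↦ u * a * u⁻¹ = u * a * star u` of a unital C*-algebra `A`,
where `u` ranges over the unitaries of `A`, form a finite set of maps `A → A`, then `A` is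
commutative. -/
theorem stmt_6 {A : Type*} [NormedRing A] [StarRing A] [CStarRing A]
    [NormedAlgebra ℂ A] [CompleteSpace A] [StarModule ℂ A]
    (hfin : Set.Finite {f : A → A | ∃ u ∈ unitary A, f = fun a => u * a * star u}) :
    ∀ a b : A, a * b = b * a := by
  suffices key : ∀ a b : A, IsSelfAdjoint a → a * b = b * a by
    intro a b
    have h1 : (ℜ a : A) * b = b * (ℜ a : A) := key _ _ (ℜ a).2
    have h2 : (ℑ a : A) * b = b * (ℑ a : A) := key _ _ (ℑ a).2
    calc a * b = ((ℜ a : A) + I • (ℑ a : A)) * b := by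
          rw [realPart_add_I_smul_imaginaryPart]
      _ = b * ((ℜ a : A) + I • (ℑ a : A)) := by
          rw [add_mul, mul_add, smul_mul_assoc, mul_smul_comm, h1, h2]
      _ = b * a := by rw [realPart_add_I_smul_imaginaryPart]
  intro a b hsa
  set c : A := I • a with hc
  have hcskew : star c = -c := by
    rw [hc, star_smul, hsa.star_eq, Complex.star_def, Complex.conj_I, neg_smul]
  have hskewmem : ∀ t : ℝ, (t : ℂ) • c ∈ skewAdjoint A := by
    intro t
    rw [skewAdjoint.mem_iff, star_smul, hcskew]
    simp [Complex.star_def, Complex.conj_ofReal, smul_neg]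
  set u : ℝ → A := fun t => NormedSpace.exp ((t : ℂ) • c) with hu
  have huni : ∀ t, u t ∈ unitary A := fun t =>
    letI : NormedAlgebra ℚ A := .restrictScalars ℚ ℂ A
    NormedSpace.exp_mem_unitary_of_mem_skewAdjoint (hskewmem t)
  have humul : ∀ s t : ℝ, u (s + t) = u s * u t := by
    intro s t
    rw [hu]
    simp only
    rw [show ((s + t : ℝ) : ℂ) • c = (s : ℂ) • c + (t : ℂ) • c by push_cast; rw [add_smul]]
    letI : NormedAlgebra ℚ A := .restrictScalars ℚ ℂ A
    exact NormedSpace.exp_add_of_commute (((Commute.refl c).smul_left _).smul_right _)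
  have hu0 : u 0 = 1 := by
    rw [hu]; simp [NormedSpace.exp_zero]
  set φ : ℝ → A → A := fun t x => u t * x * star (u t) with hφ
  have hφ0 : φ 0 = id := by funext x; simp [hφ, hu0]
  have hφadd : ∀ s t : ℝ, φ (s + t) = φ s ∘ φ t := by
    intro s t; funext x
    simp only [hφ, Function.comp_apply, humul, star_mul, mul_assoc]
  have hφn : ∀ (n : ℕ) (t : ℝ), φ ((n : ℝ) * t) = (φ t)^[n] := by
    intro n
    induction n with
    | zero => intro t; simpa using hφ0
    | succ n ih =>
        intro t
        rw [Function.iterate_succ, ← ih t, ← hφadd]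
        congr 1; push_cast; ring
  have hφmem : ∀ t, φ t ∈ {f : A → A | ∃ u ∈ unitary A, f = fun a => u * a * star u} :=
    fun t => ⟨u t, huni t, rfl⟩
  -- every inner automorphism in our one-parameter family is the identity
  have hker : ∀ t : ℝ, φ t = id := by
    intro t
    set N := hfin.toFinset.card with hN
    set s : ℝ := t / (Nat.factorial N) with hs
    have key2 : ∀ i j : ℕ, i < j → j ≤ N → φ ((i : ℝ) * s) = φ ((j : ℝ) * s) → φ t = id := by
      intro i j hij hjN heqq
      set k := j - i with hk
      have hk1 : 1 ≤ k := by omega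
      have hkN : k ≤ N := by omega
      have hinv : φ ((i : ℝ) * s) ∘ φ (-((i : ℝ) * s)) = id := by
        rw [← hφadd]; simpa using hφ0
      have h1 : φ ((j : ℝ) * s) = φ ((k : ℝ) * s) ∘ φ ((i : ℝ) * s) := by
        rw [← hφadd]
        congr 1
        have hkr : (k : ℝ) = (j : ℝ) - i := by
          rw [hk, Nat.cast_sub hij.le]
        rw [hkr]; ring
      have hid : φ ((k : ℝ) * s) = id := by
        calc φ ((k : ℝ) * s)
            = φ ((k : ℝ) * s) ∘ (φ ((i : ℝ) * s) ∘ φ (-((i : ℝ) * s))) := by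
              rw [hinv, Function.comp_id]
          _ = (φ ((k : ℝ) * s) ∘ φ ((i : ℝ) * s)) ∘ φ (-((i : ℝ) * s)) := rfl
          _ = φ ((i : ℝ) * s) ∘ φ (-((i : ℝ) * s)) := by rw [← h1, ← heqq]
          _ = id := hinv
      have hdvd : k ∣ Nat.factorial N := Nat.dvd_factorial hk1 hkN
      have hfac0 : ((Nat.factorial N : ℕ) : ℝ) ≠ 0 := by
        exact_mod_cast (Nat.factorial_ne_zero N)
      have hNfac : ((Nat.factorial N : ℕ) : ℝ) * s = t := by
        rw [hs, mul_comm, div_mul_cancel₀ _ hfac0]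
      calc φ t = φ (((Nat.factorial N : ℕ) : ℝ) * s) := by rw [hNfac]
        _ = φ ((((Nat.factorial N / k) * k : ℕ) : ℝ) * s) := by rw [Nat.div_mul_cancel hdvd]
        _ = φ (((Nat.factorial N / k : ℕ) : ℝ) * ((k : ℝ) * s)) := by congr 1; push_cast; ring
        _ = (φ ((k : ℝ) * s))^[Nat.factorial N / k] := hφn _ _
        _ = id := by rw [hid]; exact Function.iterate_id _
    have hmap : ∀ i : Fin (N + 1), φ ((i : ℕ) * s) ∈ hfin.toFinset := by
      intro i; rw [Set.Finite.mem_toFinset]; exact hφmem _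
    obtain ⟨i, j, hij, heq⟩ := Fintype.exists_ne_map_eq_of_card_lt
      (fun i : Fin (N + 1) => (⟨φ (((i : ℕ) : ℝ) * s), hmap i⟩ : hfin.toFinset))
      (by simp [Fintype.card_coe, hN])
    have heq' : φ (((i : ℕ) : ℝ) * s) = φ (((j : ℕ) : ℝ) * s) :=
      congrArg Subtype.val heq
    have hij' : (i : ℕ) ≠ (j : ℕ) := fun h => hij (Fin.ext h)
    rcases lt_or_gt_of_ne hij' with h | h
    · exact key2 _ _ h (by omega) heq'
    · exact key2 _ _ h (by omega) heq'.symm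
  -- the unitaries u t are central relative to b
  have hcomm : ∀ t : ℝ, u t * b = b * u t := by
    intro t
    have h1 : u t * b * star (u t) = b := congrFun (hker t) b
    have h2 : star (u t) * u t = 1 := (Unitary.mem_iff.mp (huni t)).1
    calc u t * b = u t * b * (star (u t) * u t) := by rw [h2, mul_one]
      _ = (u t * b * star (u t)) * u t := (mul_assoc _ _ _).symm
      _ = b * u t := by rw [h1]
  -- differentiate at 0
  have hd1 : HasDerivAt (fun z : ℂ => NormedSpace.exp (z • c) * b) (c * b)
      (((0 : ℝ) : ℂ)) := by
    have := (hasDerivAt_exp_smul_const (𝕂 := ℂ) c (((0 : ℝ) : ℂ))).mul_const b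
    simpa [NormedSpace.exp_zero] using this
  have hd2 : HasDerivAt (fun z : ℂ => b * NormedSpace.exp (z • c)) (b * c)
      (((0 : ℝ) : ℂ)) := by
    have := (hasDerivAt_exp_smul_const (𝕂 := ℂ) c (((0 : ℝ) : ℂ))).const_mul b
    simpa [NormedSpace.exp_zero] using this
  have hcb : c * b = b * c := by
    have hre : HasDerivAt (fun y : ℝ => (y : ℂ)) 1 (0 : ℝ) := Complex.ofRealCLM.hasDerivAt
    have hd1r : HasDerivAt (fun y : ℝ => NormedSpace.exp ((y : ℂ) • c) * b) (c * b) 0 := by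
      simpa [Function.comp_def] using HasDerivAt.scomp (0 : ℝ) hd1 hre
    have hd2r : HasDerivAt (fun y : ℝ => b * NormedSpace.exp ((y : ℂ) • c)) (b * c) 0 := by
      simpa [Function.comp_def] using HasDerivAt.scomp (0 : ℝ) hd2 hre
    refine hd1r.unique ?_
    have hfeq : (fun y : ℝ => NormedSpace.exp ((y : ℂ) • c) * b)
        = fun y : ℝ => b * NormedSpace.exp ((y : ℂ) • c) := funext fun t => hcomm t
    rw [hfeq]
    exact hd2r
  have hIs : I • (a * b) = I • (b * a) := by
    rw [hc, smul_mul_assoc, mul_smul_comm] at hcb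
    exact hcb
  have h3 := congrArg (fun x : A => (-I) • x) hIs
  simpa [smul_smul, neg_mul, I_mul_I, neg_neg, one_smul] using h3
end

section
/- Let X and Y be compact Hausdorff topological spaces and f : X → Y a covering map with finite fibers. Equip the ring C(X, ℂ) of continuous ℂ-valued functions on X with the C(Y, ℂ)-module structure induced by the ring homomorphism C(Y, ℂ) → C(X, ℂ), g ↦ g ∘ f. Then C(X, ℂ) is a finitely generated projective C(Y, ℂ)-module. -/
open scoped Classical
open scoped Topology

lemma cont_extend {Z : Type*} [TopologicalSpace Z] {U : Set Z} (hU : IsOpen U)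
    {c : Z → ℝ} (hc : Continuous c) (hsupp : tsupport c ⊆ U)
    {F : Z → ℂ} (hF : ContinuousOn F U) :
    Continuous (fun z => if z ∈ U then (c z : ℂ) * F z else 0) := by
  rw [continuous_iff_continuousAt]
  intro z
  by_cases hz : z ∈ U
  · have h1 : ContinuousAt (fun w => (c w : ℂ) * F w) z :=
      ((Complex.continuous_ofReal.comp hc).continuousAt).mul
        (hF.continuousAt (hU.mem_nhds hz))
    refine h1.congr ?_
    filter_upwards [hU.mem_nhds hz] with w hw
    simp [hw]
  · have hz' : z ∉ tsupport c := fun h => hz (hsupp h)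
    have h0 : ∀ᶠ w in 𝓝 z, (fun w => if w ∈ U then (c w : ℂ) * F w else 0) w = 0 := by
      filter_upwards [(isClosed_tsupport c).isOpen_compl.mem_nhds hz'] with w hw
      by_cases hwU : w ∈ U
      · have : c w = 0 := image_eq_zero_of_notMem_tsupport hw
        simp [hwU, this]
      · simp [hwU]
    exact ContinuousAt.congr continuousAt_const (by filter_upwards [h0] with w hw using hw.symm)

lemma contOn_ind {Z I : Type*} [TopologicalSpace Z] [TopologicalSpace I] [DiscreteTopology I]
    [DecidableEq I] {V : Set Z} {g : Z → I} (hg : ContinuousOn g V) (k : I) :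
    ContinuousOn (fun z => if g z = k then (1 : ℂ) else 0) V := by
  intro z hz
  have h1 : ∀ᶠ w in 𝓝[V] z, g w = g z :=
    hg z hz ((isOpen_discrete ({g z} : Set I)).mem_nhds rfl)
  refine ContinuousWithinAt.congr_of_eventuallyEq
    (continuousWithinAt_const (b := if g z = k then (1 : ℂ) else 0)) ?_ rfl
  filter_upwards [h1] with w hw
  rw [hw]

set_option maxHeartbeats 1000000 in
/-- If `f : X → Y` is a finitely sheeted covering map of compact Hausdorff spaces, then `C(X, ℂ)`
is a finitely generated projective module over `C(Y, ℂ)`, where the module structure is given by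
restriction of scalars along precomposition with `f`. -/
theorem stmt_11 {X Y : Type*} [TopologicalSpace X] [TopologicalSpace Y]
    [CompactSpace X] [T2Space X] [CompactSpace Y] [T2Space Y]
    (f : X → Y) (hf : IsCoveringMap f) (hfin : ∀ y : Y, Set.Finite (f ⁻¹' {y})) :
    letI : Algebra C(Y, ℂ) C(X, ℂ) :=
      (ContinuousMap.compRightAlgHom ℂ ℂ ⟨f, hf.continuous⟩).toRingHom.toAlgebra
    Module.Finite C(Y, ℂ) C(X, ℂ) ∧ Module.Projective C(Y, ℂ) C(X, ℂ) := by
  letI : Algebra C(Y, ℂ) C(X, ℂ) :=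
    (ContinuousMap.compRightAlgHom ℂ ℂ ⟨f, hf.continuous⟩).toRingHom.toAlgebra
  set fC : C(X, Y) := ⟨f, hf.continuous⟩ with hfC
  haveI hdisc : ∀ y : Y, DiscreteTopology ↥(f ⁻¹' {y}) := fun y => (hf y).1
  -- finite subcover of the range by trivializing neighborhoods
  obtain ⟨b', hb'sub, hb'fin, hb'cov⟩ := (isCompact_range hf.continuous).elim_finite_subcover_image
    (b := Set.range f) (c := fun y => if h : (f ⁻¹' {y}).Nonempty then
      (haveI := h.to_subtype; (hf y).toTrivialization).baseSet else ∅)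
    (fun y _ => by
      split_ifs with h
      · exact Bundle.Trivialization.open_baseSet _
      · exact isOpen_empty)
    (fun y hy => Set.mem_biUnion hy (by
      obtain ⟨x, rfl⟩ := hy
      have h : (f ⁻¹' {f x}).Nonempty := ⟨x, rfl⟩
      simp only [dif_pos h]
      haveI := h.to_subtype
      exact (hf (f x)).mem_toTrivialization_baseSet))
  set s : Finset Y := hb'fin.toFinset with hsdef
  have hsne : ∀ y ∈ s, Nonempty ↥(f ⁻¹' {y}) := fun y hy => by
    obtain ⟨x, hx⟩ := hb'sub (hb'fin.mem_toFinset.mp hy)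
    exact ⟨⟨x, hx⟩⟩
  set ι := {y : Y // y ∈ s}
  set T : ∀ i : ι, Bundle.Trivialization (f ⁻¹' {(i : Y)}) f := fun i =>
    haveI := hsne i i.2; (hf i).toTrivialization with hT
  set U : ι → Set Y := fun i => (T i).baseSet with hU
  have hUopen : ∀ i, IsOpen (U i) := fun i => (T i).open_baseSet
  have hUcov : Set.range f ⊆ ⋃ i, U i := by
    intro y hy
    obtain ⟨z, hz1, hz2⟩ := Set.mem_iUnion₂.mp (hb'cov hy)
    have hzs : z ∈ s := hb'fin.mem_toFinset.mpr hz1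
    have h : (f ⁻¹' {z}).Nonempty := let ⟨x, hx⟩ := hsne z hzs; ⟨x, hx⟩
    simp only [dif_pos h] at hz2
    exact Set.mem_iUnion.mpr ⟨⟨z, hzs⟩, hz2⟩
  obtain ⟨ρ, hρ⟩ := PartitionOfUnity.exists_isSubordinate (isCompact_range hf.continuous).isClosed
    U hUopen hUcov
  haveI : ∀ i : ι, Finite ↥(f ⁻¹' {(i : Y)}) := fun i => (hfin (i : Y)).to_subtype
  haveI : Finite ι := by infer_instance
  set κ := Σ i : ι, ↥(f ⁻¹' {(i : Y)}) with hκ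
  haveI : Fintype ι := FinsetCoe.fintype s
  haveI : ∀ i : ι, Fintype ↥(f ⁻¹' {(i : Y)}) := fun i => (hfin (i : Y)).fintype
  haveI : Finite κ := by infer_instance
  haveI : Fintype κ := by infer_instance
  -- the square root of the partition of unity, as a real function on Y
  set c : ι → Y → ℝ := fun i y => Real.sqrt (ρ i y) with hc
  have hccont : ∀ i, Continuous (c i) := fun i => Real.continuous_sqrt.comp (ρ i).continuous
  have hcsupp : ∀ i, tsupport (c i) ⊆ U i := fun i =>
    (closure_mono (Function.support_comp_subset Real.sqrt_zero (ρ i))).trans (hρ i)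
  -- local sections
  set sec : ∀ (i : ι), ↥(f ⁻¹' {(i : Y)}) → Y → X :=
    fun i k y => (T i).toOpenPartialHomeomorph.symm (y, k) with hsec
  have hsec_mem : ∀ (i : ι) (k) (y : Y), y ∈ U i → f (sec i k y) = y := by
    intro i k y hy
    exact (T i).proj_symm_apply ((T i).mem_target.mpr hy)
  have hsecCont : ∀ (i : ι) (k), ContinuousOn (fun y => sec i k y) (U i) := by
    intro i k
    have h1 : ContinuousOn (T i).toOpenPartialHomeomorph.symm (T i).target :=
      (T i).toOpenPartialHomeomorph.continuousOn_symm
    refine h1.comp (Continuous.continuousOn (by continuity)) ?_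
    intro y hy
    exact (T i).mem_target.mpr hy
  -- the components of the "coordinates" map φ
  have hφcont : ∀ (h : C(X, ℂ)) (p : κ),
      Continuous (fun y => if y ∈ U p.1 then (c p.1 y : ℂ) * h (sec p.1 p.2 y) else 0) :=
    fun h p => cont_extend (hUopen p.1) (hccont p.1) (hcsupp p.1)
      (h.continuous.comp_continuousOn (hsecCont p.1 p.2))
  set φf : C(X, ℂ) → (κ → C(Y, ℂ)) := fun h p =>
    ⟨fun y => if y ∈ U p.1 then (c p.1 y : ℂ) * h (sec p.1 p.2 y) else 0, hφcont h p⟩ with hφf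
  -- the "bump" functions on X
  have hτcont : ∀ p : κ, Continuous (fun x => if x ∈ (T p.1).source then
      (c p.1 (f x) : ℂ) * (if ((T p.1) x).2 = p.2 then (1 : ℂ) else 0) else 0) := by
    intro p
    have hg0 : ContinuousOn (⇑(T p.1)) (T p.1).source :=
      (T p.1).toOpenPartialHomeomorph.continuousOn
    have hg : ContinuousOn (fun x => ((T p.1) x).2) (T p.1).source :=
      fun x hx => (hg0 x hx).snd
    refine cont_extend (T p.1).open_source
      ((hccont p.1).comp hf.continuous) ?_ (contOn_ind hg p.2)
    have h1 : Function.support (fun x => c p.1 (f x)) ⊆ f ⁻¹' tsupport (c p.1) := by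
      intro x hx
      exact subset_closure hx
    have h2 : IsClosed (f ⁻¹' tsupport (c p.1)) :=
      (isClosed_tsupport _).preimage hf.continuous
    refine (closure_minimal h1 h2).trans ?_
    rw [(T p.1).source_eq]
    exact Set.preimage_mono (hcsupp p.1)
  set τ : κ → C(X, ℂ) := fun p =>
    ⟨fun x => if x ∈ (T p.1).source then
      (c p.1 (f x) : ℂ) * (if ((T p.1) x).2 = p.2 then (1 : ℂ) else 0) else 0,
      hτcont p⟩ with hτ
  -- smul lemmas
  have hsmulX : ∀ (g : C(Y, ℂ)) (h : C(X, ℂ)) (x : X), (g • h) x = g (f x) * h x := by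
    intro g h x
    rw [Algebra.smul_def, RingHom.algebraMap_toAlgebra]
    rfl
  have hsmulP : ∀ (g : C(Y, ℂ)) (G : κ → C(Y, ℂ)) (p : κ) (y : Y),
      ((g • G) p) y = g y * (G p) y := fun g G p y => rfl
  -- φ as a linear map
  set φ : C(X, ℂ) →ₗ[C(Y, ℂ)] (κ → C(Y, ℂ)) :=
    { toFun := φf
      map_add' := by
        intro a b
        funext p
        ext y
        by_cases hy : y ∈ U p.1 <;> simp [hφf, hy, mul_add]
      map_smul' := by
        intro g a
        funext p
        ext y
        rw [RingHom.id_apply, hsmulP g (φf a) p y]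
        simp only [hφf, ContinuousMap.coe_mk]
        by_cases hy : y ∈ U p.1
        · rw [if_pos hy, if_pos hy, hsmulX, hsec_mem p.1 p.2 y hy]
          ring
        · rw [if_neg hy, if_neg hy, mul_zero] } with hφ
  -- ψ as a linear map
  set ψ : (κ → C(Y, ℂ)) →ₗ[C(Y, ℂ)] C(X, ℂ) :=
    { toFun := fun G => ∑ p : κ, (G p).comp fC * τ p
      map_add' := by
        intro a b
        simp only [Pi.add_apply]
        rw [← Finset.sum_add_distrib]
        congr 1
        funext p
        ext x
        simp [add_mul]
      map_smul' := by
        intro g G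
        ext x
        rw [RingHom.id_apply, hsmulX]
        simp only [ContinuousMap.sum_apply, ContinuousMap.mul_apply, ContinuousMap.comp_apply]
        rw [Finset.mul_sum]
        refine Finset.sum_congr rfl fun p _ => ?_
        rw [hsmulP g G p (fC x)]
        simp only [hfC, ContinuousMap.coe_mk]
        ring } with hψ
  -- the retraction property
  have hcomp : ψ.comp φ = LinearMap.id := by
    refine LinearMap.ext fun h => ContinuousMap.ext fun x => ?_
    simp only [LinearMap.comp_apply, LinearMap.id_apply, hψ, hφ, LinearMap.coe_mk,
      AddHom.coe_mk]
    simp only [ContinuousMap.sum_apply, ContinuousMap.mul_apply, ContinuousMap.comp_apply]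
    have huniv : (Finset.univ : Finset κ) = Finset.univ.sigma (fun _ => Finset.univ) := by
      ext p
      simp
    rw [huniv, Finset.sum_sigma]
    have key : ∀ i : ι, ∑ k : ↥(f ⁻¹' {(i : Y)}),
        (φf h ⟨i, k⟩) (fC x) * (τ ⟨i, k⟩) x = (ρ i (f x) : ℂ) * h x := by
      intro i
      by_cases hx : x ∈ (T i).source
      · have hfx : f x ∈ U i := (T i).mem_source.mp hx
        have hsum : ∀ k : ↥(f ⁻¹' {(i : Y)}),
            (φf h ⟨i, k⟩) (fC x) * (τ ⟨i, k⟩) x =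
            if k = ((T i) x).2 then (c i (f x) : ℂ) * (c i (f x) : ℂ) * h (sec i k (f x))
            else 0 := by
          intro k
          simp only [hφf, hτ, ContinuousMap.coe_mk, hfC]
          rw [if_pos hfx, if_pos hx]
          by_cases hk : k = ((T i) x).2
          · rw [if_pos hk, if_pos hk.symm]
            ring
          · rw [if_neg hk, if_neg (fun hh => hk hh.symm)]
            ring
        rw [Finset.sum_congr rfl (fun k _ => hsum k), Finset.sum_ite_eq' Finset.univ
          ((T i) x).2 (fun k => (c i (f x) : ℂ) * (c i (f x) : ℂ) * h (sec i k (f x)))]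
        rw [if_pos (Finset.mem_univ _)]
        have hsecx : sec i ((T i) x).2 (f x) = x :=
          (T i).symm_apply_mk_proj hx
        rw [hsecx]
        have : (c i (f x) : ℂ) * (c i (f x) : ℂ) = (ρ i (f x) : ℂ) := by
          rw [← Complex.ofReal_mul]
          norm_cast
          exact Real.mul_self_sqrt (ρ.nonneg i (f x))
        rw [this]
      · have hfx : f x ∉ U i := fun hh => hx ((T i).mem_source.mpr hh)
        have hρ0 : ρ i (f x) = 0 := by
          have : f x ∉ tsupport (ρ i) := fun hh => hfx (hρ i hh)
          exact image_eq_zero_of_notMem_tsupport this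
        rw [hρ0]
        simp only [Complex.ofReal_zero, zero_mul]
        refine Finset.sum_eq_zero fun k _ => ?_
        simp only [hφf, hτ, ContinuousMap.coe_mk, hfC]
        rw [if_neg hfx]
        ring
    rw [Finset.sum_congr rfl (fun i _ => key i)]
    rw [← Finset.sum_mul]
    have : (∑ i : ι, (ρ i (f x) : ℂ)) = 1 := by
      rw [← Complex.ofReal_sum]
      norm_cast
      rw [← finsum_eq_sum_of_fintype (fun i => ρ i (f x))]
      exact ρ.sum_eq_one (Set.mem_range_self x)
    rw [this, one_mul]
  have hsurj : Function.Surjective ψ := fun h =>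
    ⟨φ h, by rw [← LinearMap.comp_apply, hcomp, LinearMap.id_apply]⟩
  exact ⟨Module.Finite.of_surjective ψ hsurj, Module.Projective.of_split φ ψ hcomp⟩
end
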